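/- arXiv:2105.07794 — 9 statements merged into one kernel-verified Lean document; each statement's English description precedes it below -/
import Mathlib

section
/- Let K, g : ℝ → ℝ satisfy K(x+y) = K(x) + g(x)K(y) for all x, y ∈ ℝ, with g not identically 1 somewhere (i.e., g(x₀) ≠ 1 for some x₀). Then g is multiplicative: g(x+y) = g(x)·g(y) for all x, y, provided K is not identically zero. -/
/-- In the Goldie functional equation with `g` nontrivial and `K` not identically
zero, the auxiliary `g` is multiplicative. -/
theorem goldie_auxiliary_multiplicative (K g : ℝ → ℝ)
    (hGFE : ∀ x y : ℝ, K (x + y) = K x + g x * K y)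
    (x₀ : ℝ) (hx₀ : g x₀ ≠ 1)
    (hK : ∃ x : ℝ, K x ≠ 0) :
    ∀ x y : ℝ, g (x + y) = g x * g y := by
  have hsym : ∀ x y : ℝ, K x * (1 - g y) = K y * (1 - g x) := by
    intro x y
    have h1 := hGFE x y
    have h2 := hGFE y x
    rw [add_comm y x] at h2
    nlinarith [h1, h2]
  set c : ℝ := K x₀ / (1 - g x₀) with hc
  have hg1 : (1 : ℝ) - g x₀ ≠ 0 := by
    intro h; apply hx₀; linarith
  have hKform : ∀ x : ℝ, K x = c * (1 - g x) := by
    intro x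
    have := hsym x x₀
    rw [hc, div_mul_eq_mul_div, eq_div_iff hg1]
    linarith [this]
  have hcne : c ≠ 0 := by
    obtain ⟨x, hx⟩ := hK
    intro h
    apply hx
    rw [hKform x, h, zero_mul]
  intro x y
  have h := hGFE x y
  rw [hKform (x + y), hKform x, hKform y] at h
  have : c * (1 - g (x + y)) = c * (1 - g x * g y) := by ring_nf; ring_nf at h; linarith
  have := mul_left_cancel₀ hcne this
  linarith
end

section
/- Let A be a commutative unital real Banach algebra and S : A → A a continuous function satisfying S(x + S(x)y) = S(x)S(y) on G*_S(A) = {x : S(x) ∈ A⁻¹}. If the operation x ∘_S y := x + S(x)y is commutative on A⁻¹ ∩ G*_S(A) and this set is nonempty, then there exists ρ ∈ A such that S(a) = 1 + ρ·a for all a ∈ A⁻¹ ∩ G*_S(A). -/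
/-- If the Popa operation is commutative on `A⁻¹ ∩ G*_S(A)` (nonempty), then
`S a = 1 + ρ a` there for some `ρ ∈ A`. -/
theorem commutative_popa_affine {A : Type*} [NormedCommRing A] [NormedAlgebra ℝ A]
    [CompleteSpace A] (S : A → A) (hS : Continuous S)
    (hGS : ∀ x y : A, IsUnit (S x) → IsUnit (S y) → S (x + S x * y) = S x * S y)
    (hcomm : ∀ a b : A, IsUnit a → IsUnit (S a) → IsUnit b → IsUnit (S b) →
      a + S a * b = b + S b * a)
    (hne : ∃ a : A, IsUnit a ∧ IsUnit (S a)) :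
    ∃ ρ : A, ∀ a : A, IsUnit a → IsUnit (S a) → S a = 1 + ρ * a := by
  obtain ⟨b, hb, hSb⟩ := hne
  refine ⟨(S b - 1) * ↑hb.unit⁻¹, fun a ha hSa => ?_⟩
  have h := hcomm a b ha hSa hb hSb
  have key : (S a - 1) * b = (S b - 1) * a := by ring_nf; linear_combination h
  have hinv : (↑hb.unit⁻¹ : A) * b = 1 := hb.val_inv_mul
  calc S a = (S a - 1) * b * ↑hb.unit⁻¹ + 1 := by
        linear_combination (1 - S a) * hinv
    _ = 1 + (S b - 1) * ↑hb.unit⁻¹ * a := by rw [key]; ring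
end

section
/- Let A be a commutative unital real Banach algebra and S : A → A a continuous solution of S(x+S(x)y) = S(x)S(y) on G* = {x : S(x) ∈ A⁻¹}. Then N := {x : S(x) = 1} is closed, and N is either the singleton {0} or is dense-in-itself (every point of N is an accumulation point of N). -/
open Filter Topology

/-- Proposition 4.1: for continuous `S`, the kernel `N = {x : S x = 1}` is closed,
and is either `{0}` or dense-in-itself. -/
theorem kernel_closed_and_perfect_or_trivial {A : Type*} [NormedCommRing A]
    [NormedAlgebra ℝ A] [CompleteSpace A] (S : A → A) (hS : Continuous S)
    (hGS : ∀ x y : A, IsUnit (S x) → IsUnit (S y) → S (x + S x * y) = S x * S y) :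
    IsClosed {x : A | S x = 1} ∧
    ({x : A | S x = 1} = {0} ∨
      ∀ a ∈ {x : A | S x = 1}, a ∈ closure ({x : A | S x = 1} \ {a})) := by
  refine ⟨isClosed_eq hS continuous_const, ?_⟩
  by_cases hN : {x : A | S x = 1} = {0}
  · exact Or.inl hN
  right
  intro a ha
  by_contra hiso
  simp only [Set.mem_setOf_eq] at ha
  -- additive closedness of N
  have hadd : ∀ x y : A, S x = 1 → S y = 1 → S (x + y) = 1 := by
    intro x y hx hy
    have h := hGS x y (by rw [hx]; exact isUnit_one) (by rw [hy]; exact isUnit_one)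
    rw [hx, one_mul, one_mul] at h
    rw [h, hy]
  -- isolation radius
  rw [Metric.mem_closure_iff] at hiso
  push_neg at hiso
  obtain ⟨ε, hε, hsep⟩ := hiso
  have hUopen : IsOpen {x : A | IsUnit (S x)} := Units.isOpen.preimage hS
  obtain ⟨r₂, hr₂, hballU⟩ := Metric.isOpen_iff.mp hUopen a
    (by simp only [Set.mem_setOf_eq, ha]; exact isUnit_one)
  set r := min ε r₂ with hrdef
  have hr : 0 < r := lt_min hε hr₂
  -- isolation at a
  have hisol : ∀ z : A, S z = 1 → dist a z < r → z = a := by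
    intro z hz hd
    by_contra hne
    exact absurd (lt_of_lt_of_le hd (min_le_left _ _))
      (not_lt.mpr (hsep z ⟨hz, fun h => hne h⟩))
  have hunit : ∀ x : A, dist x a < r → IsUnit (S x) := by
    intro x hd
    exact hballU (Metric.mem_ball.mpr (lt_of_lt_of_le hd (min_le_right _ _)))
  -- uniform isolation across N
  have hisoN : ∀ c z : A, S c = 1 → S z = 1 → dist z c < r → z = c := by
    intro c z hc hz hd
    have hd' : dist (z - c + a) a < r := by
      rw [dist_eq_norm] at hd ⊢
      convert hd using 2
      abel
    have h1 : IsUnit (S (z - c + a)) := hunit _ hd'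
    have h2 := hGS c (z - c + a) (by rw [hc]; exact isUnit_one) h1
    rw [hc, one_mul, one_mul] at h2
    have h3 : c + (z - c + a) = z + a := by abel
    rw [h3] at h2
    have h4 : S (z - c + a) = 1 := by rw [← h2]; exact hadd z a hz ha
    have h5 : z - c + a = a := hisol _ h4 (by rw [dist_comm]; exact hd')
    have : z - c = 0 := by
      have := congrArg (fun t => t - a) h5
      simpa using this
    rw [sub_eq_zero] at this
    exact this
  -- eventually units near points of N
  have hUev : ∀ c : A, S c = 1 → ∀ᶠ x in 𝓝 c, IsUnit (S x) := by
    intro c hc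
    exact hS.continuousAt.eventually_mem
      (Units.isOpen.mem_nhds (by simp only [Set.mem_setOf_eq, hc]; exact isUnit_one))
  have hinv1 : ContinuousAt (Ring.inverse : A → A) (1 : A) := by
    simpa using NormedRing.inverse_continuousAt (1 : Aˣ)
  -- key lemma: inverse values times (c+y) are in N
  have key : ∀ c y : A, S c = 1 → S y = 1 →
      ∀ᶠ x in 𝓝 c, S (Ring.inverse (S x) * (c + y)) = 1 := by
    intro c y hc hy
    have hinvc : ContinuousAt (fun x : A => Ring.inverse (S x)) c := by
      have : ContinuousAt (Ring.inverse : A → A) (S c) := by rw [hc]; exact hinv1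
      exact this.comp hS.continuousAt
    have hwc : ContinuousAt (fun x : A => Ring.inverse (S x) * (c + y - x)) c :=
      hinvc.mul (continuousAt_const.sub continuousAt_id)
    have hwc0 : (fun x : A => Ring.inverse (S x) * (c + y - x)) c = y := by
      simp [hc, Ring.inverse_one]
    have hw : ∀ᶠ x in 𝓝 c, IsUnit (S (Ring.inverse (S x) * (c + y - x))) := by
      refine (hS.continuousAt.comp hwc).eventually_mem (Units.isOpen.mem_nhds ?_)
      simp only [Function.comp, Set.mem_setOf_eq, hwc0, hy]
      exact isUnit_one
    filter_upwards [hUev c hc, hw] with x hx hwx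
    have h1 : x + S x * (Ring.inverse (S x) * (c + y - x)) = c + y := by
      rw [← mul_assoc, Ring.mul_inverse_cancel _ hx, one_mul]
      abel
    have h2 := hGS x _ hx hwx
    rw [h1] at h2
    have hcy : S (c + y) = 1 := hadd c y hc hy
    have h2' : S x * S (Ring.inverse (S x) * (c + y - x)) = 1 := by rw [← h2, hcy]
    have hweq : S (Ring.inverse (S x) * (c + y - x)) = Ring.inverse (S x) := by
      have h := congrArg (fun t => Ring.inverse (S x) * t) h2'
      simp only [mul_one] at h
      rw [← mul_assoc, Ring.inverse_mul_cancel _ hx, one_mul] at h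
      exact h
    have h3 := hGS _ x hwx hx
    rw [hweq] at h3
    have h4 : Ring.inverse (S x) * (c + y - x) + Ring.inverse (S x) * x
        = Ring.inverse (S x) * (c + y) := by
      rw [← mul_add]; congr 1; abel
    rw [h4, Ring.inverse_mul_cancel _ hx] at h3
    exact h3
  -- key2 : S x * (c+y) = c+y for x near c
  have key2 : ∀ c y : A, S c = 1 → S y = 1 → ∀ᶠ x in 𝓝 c, S x * (c + y) = c + y := by
    intro c y hc hy
    have hinvc : ContinuousAt (fun x : A => Ring.inverse (S x)) c := by
      have : ContinuousAt (Ring.inverse : A → A) (S c) := by rw [hc]; exact hinv1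
      exact this.comp hS.continuousAt
    have hcont : ContinuousAt (fun x : A => Ring.inverse (S x) * (c + y)) c :=
      hinvc.mul continuousAt_const
    have hval : Ring.inverse (S c) * (c + y) = c + y := by
      rw [hc, Ring.inverse_one, one_mul]
    have hnear : ∀ᶠ x in 𝓝 c, dist (Ring.inverse (S x) * (c + y)) (c + y) < r := by
      have hm : Metric.ball (c + y) r ∈ 𝓝 ((fun x : A => Ring.inverse (S x) * (c + y)) c) := by
        show Metric.ball (c + y) r ∈ 𝓝 (Ring.inverse (S c) * (c + y))
        rw [hval]; exact Metric.ball_mem_nhds _ hr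
      filter_upwards [hcont.eventually_mem hm] with x hx using Metric.mem_ball.mp hx
    filter_upwards [key c y hc hy, hUev c hc, hnear] with x hx1 hx2 hx3
    have heq : Ring.inverse (S x) * (c + y) = c + y :=
      hisoN (c + y) _ (hadd c y hc hy) hx1 hx3
    calc S x * (c + y) = S x * (Ring.inverse (S x) * (c + y)) := by rw [heq]
      _ = S x * Ring.inverse (S x) * (c + y) := (mul_assoc _ _ _).symm
      _ = c + y := by rw [Ring.mul_inverse_cancel _ hx2, one_mul]
  -- notation
  have ha2 : S (a + a) = 1 := hadd a a ha ha
  set F := a + a + (a + a) with hFdef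
  have ha4 : S F = 1 := hadd _ _ ha2 ha2
  -- key5 : P = Q near (a,a)
  have key5 : ∀ᶠ p : A × A in 𝓝 (a, a),
      p.1 + S p.1 * p.2 = p.2 + S p.2 * p.1 := by
    have hSfst : ContinuousAt (fun p : A × A => S p.1) (a, a) :=
      hS.continuousAt.comp continuousAt_fst
    have hSsnd : ContinuousAt (fun p : A × A => S p.2) (a, a) :=
      hS.continuousAt.comp continuousAt_snd
    have c1 : ∀ᶠ p : A × A in 𝓝 (a, a), IsUnit (S p.1) := by
      refine hSfst.eventually_mem (Units.isOpen.mem_nhds ?_)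
      show IsUnit (S a)
      rw [ha]; exact isUnit_one
    have c2 : ∀ᶠ p : A × A in 𝓝 (a, a), IsUnit (S p.2) := by
      refine hSsnd.eventually_mem (Units.isOpen.mem_nhds ?_)
      show IsUnit (S a)
      rw [ha]; exact isUnit_one
    -- continuity of Q
    have hQc : ContinuousAt (fun p : A × A => p.2 + S p.2 * p.1) (a, a) :=
      continuousAt_snd.add (hSsnd.mul continuousAt_fst)
    have hQ0 : a + S a * a = a + a := by rw [ha, one_mul]
    have hSQc : ContinuousAt (fun p : A × A => S (p.2 + S p.2 * p.1)) (a, a) :=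
      hS.continuousAt.comp hQc
    have hinvQc : ContinuousAt
        (fun p : A × A => Ring.inverse (S (p.2 + S p.2 * p.1))) (a, a) := by
      have hqi : ContinuousAt (Ring.inverse : A → A) (S (a + S a * a)) := by
        rw [hQ0, ha2]; exact hinv1
      exact ContinuousAt.comp (f := fun p : A × A => S (p.2 + S p.2 * p.1)) (x := (a,a)) hqi hSQc
    have hGc : ContinuousAt
        (fun p : A × A => Ring.inverse (S (p.2 + S p.2 * p.1))
          * (F - (p.2 + S p.2 * p.1))) (a, a) :=
      hinvQc.mul (continuousAt_const.sub hQc)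
    have hG0 : Ring.inverse (S (a + S a * a)) * (F - (a + S a * a)) = a + a := by
      rw [hQ0, ha2, Ring.inverse_one, one_mul, hFdef]; abel
    have c3 : ∀ᶠ p : A × A in 𝓝 (a, a), IsUnit (S (Ring.inverse (S (p.2 + S p.2 * p.1))
        * (F - (p.2 + S p.2 * p.1)))) := by
      have hc' : ContinuousAt (fun p : A × A => S (Ring.inverse (S (p.2 + S p.2 * p.1))
          * (F - (p.2 + S p.2 * p.1)))) (a, a) := hS.continuousAt.comp hGc
      refine hc'.eventually_mem (Units.isOpen.mem_nhds ?_)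
      show IsUnit (S (Ring.inverse (S (a + S a * a)) * (F - (a + S a * a))))
      rw [hG0, ha2]; exact isUnit_one
    -- closeness of P - Q + F to F
    have c4 : ∀ᶠ p : A × A in 𝓝 (a, a),
        dist (p.1 + S p.1 * p.2 + (F - (p.2 + S p.2 * p.1))) F < r := by
      have hPc : ContinuousAt (fun p : A × A => p.1 + S p.1 * p.2) (a, a) :=
        continuousAt_fst.add (hSfst.mul continuousAt_snd)
      have hcont : ContinuousAt
          (fun p : A × A => p.1 + S p.1 * p.2 + (F - (p.2 + S p.2 * p.1))) (a, a) :=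
        hPc.add (continuousAt_const.sub hQc)
      have hval : a + S a * a + (F - (a + S a * a)) = F := by
        rw [hQ0]; abel
      have hm : Metric.ball F r ∈ 𝓝 ((fun p : A × A =>
          p.1 + S p.1 * p.2 + (F - (p.2 + S p.2 * p.1))) (a, a)) := by
        show Metric.ball F r ∈ 𝓝 (a + S a * a + (F - (a + S a * a)))
        rw [hval]; exact Metric.ball_mem_nhds _ hr
      filter_upwards [hcont.eventually_mem hm] with p hp using Metric.mem_ball.mp hp
    filter_upwards [c1, c2, c3, c4] with p h1 h2 h3 h4
    obtain ⟨x, x'⟩ := p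
    simp only at h1 h2 h3 h4 ⊢
    set P := x + S x * x' with hPdef
    set Q := x' + S x' * x with hQdef
    have hP := hGS x x' h1 h2
    have hQ := hGS x' x h2 h1
    rw [← hPdef] at hP
    rw [← hQdef] at hQ
    have hPQ : S P = S Q := by rw [hP, hQ, mul_comm]
    have hQu : IsUnit (S Q) := by rw [hQ]; exact h2.mul h1
    have hPu : IsUnit (S P) := by rw [hPQ]; exact hQu
    have hstep : Q + S Q * (Ring.inverse (S Q) * (F - Q)) = F := by
      rw [← mul_assoc, Ring.mul_inverse_cancel _ hQu, one_mul]; abel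
    have h6 := hGS Q (Ring.inverse (S Q) * (F - Q)) hQu h3
    rw [hstep, ha4] at h6
    have h7 := hGS P (Ring.inverse (S Q) * (F - Q)) hPu h3
    have hsimp : P + S P * (Ring.inverse (S Q) * (F - Q)) = P + (F - Q) := by
      rw [hPQ, ← mul_assoc, Ring.mul_inverse_cancel _ hQu, one_mul]
    rw [hsimp, hPQ, ← h6] at h7
    have h8 : P + (F - Q) = F := hisoN F _ ha4 h7 h4
    linear_combination h8
  -- a nonzero element of N
  obtain ⟨y₀, hy₀, hy₀ne⟩ : ∃ y₀ : A, S y₀ = 1 ∧ y₀ ≠ 0 := by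
    by_contra h
    push_neg at h
    apply hN
    ext z
    simp only [Set.mem_setOf_eq, Set.mem_singleton_iff]
    constructor
    · intro hz; exact h z hz
    · intro hz
      have ha0 : a = 0 := h a ha
      rw [hz, ← ha0]; exact ha
  -- product neighborhoods for key5
  obtain ⟨V₁, hV₁, V₂, hV₂, hV⟩ := mem_nhds_prod_iff.mp key5
  -- multiplication facts near a
  have emul : ∀ᶠ x in 𝓝 a, S x * a = a ∧ S x * y₀ = y₀ := by
    filter_upwards [key2 a a ha ha, key2 a y₀ ha hy₀] with x h1 h2
    have ha' : S x * a = a := by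
      have h1' : S x * a + S x * a = a + a := by rw [← mul_add]; exact h1
      have h2smul : (2 : ℝ) • (S x * a) = (2 : ℝ) • a := by
        rw [two_smul, two_smul]; exact h1'
      exact smul_right_injective A two_ne_zero h2smul
    refine ⟨ha', ?_⟩
    have h2' : S x * a + S x * y₀ = a + y₀ := by rw [← mul_add]; exact h2
    rw [ha'] at h2'
    exact add_left_cancel h2'
  have hT : V₁ ∩ {x : A | S x * a = a ∧ S x * y₀ = y₀} ∈ 𝓝 a :=
    Filter.inter_mem hV₁ emul
  -- choose t small, nonzero
  have hx'ev : ∀ᶠ t : ℝ in 𝓝 0, (a + t • y₀) ∈ V₂ ∧ dist (a + t • y₀) a < r := by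
    have hcont : ContinuousAt (fun t : ℝ => a + t • y₀) 0 :=
      continuousAt_const.add (continuousAt_id.smul continuousAt_const)
    have hval : a + (0 : ℝ) • y₀ = a := by simp
    have hmem : V₂ ∩ Metric.ball a r ∈ 𝓝 ((fun t : ℝ => a + t • y₀) 0) := by
      show V₂ ∩ Metric.ball a r ∈ 𝓝 (a + (0 : ℝ) • y₀)
      rw [hval]
      exact Filter.inter_mem hV₂ (Metric.ball_mem_nhds _ hr)
    filter_upwards [hcont.eventually_mem hmem] with t ht
    exact ⟨ht.1, Metric.mem_ball.mp ht.2⟩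
  obtain ⟨δ, hδ, hδsub⟩ := Metric.eventually_nhds_iff.mp hx'ev
  set t := δ / 2 with htdef
  have htne : t ≠ 0 := by positivity
  have htlt : dist t (0 : ℝ) < δ := by
    rw [Real.dist_eq, sub_zero, abs_of_pos (by positivity)]
    exact half_lt_self hδ
  obtain ⟨hx'V₂, hx'dist⟩ := hδsub htlt
  set x' := a + t • y₀ with hx'def
  -- S x' * x = x for all x in the good neighborhood
  have hSx' : ∀ x ∈ V₁ ∩ {x : A | S x * a = a ∧ S x * y₀ = y₀}, S x' * x = x := by
    intro x hx
    have h5 := hV (Set.mk_mem_prod hx.1 hx'V₂)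
    simp only [Set.mem_setOf_eq] at h5
    -- h5 : x + S x * x' = x' + S x' * x
    have hL : S x * x' = x' := by
      rw [hx'def, mul_add, hx.2.1, mul_smul_comm, hx.2.2]
    rw [hL] at h5
    have h5' : x' + x = x' + S x' * x := by rw [← h5]; abel
    exact (add_left_cancel h5').symm
  have haT : a ∈ V₁ ∩ {x : A | S x * a = a ∧ S x * y₀ = y₀} := mem_of_mem_nhds hT
  have h8 : S x' * a = a := hSx' a haT
  -- a second point a + ε • 1
  obtain ⟨δ₂, hδ₂, hδ₂sub⟩ := Metric.eventually_nhds_iff.mp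
    (show ∀ᶠ e : ℝ in 𝓝 0, (a + e • (1 : A)) ∈ V₁ ∩ {x : A | S x * a = a ∧ S x * y₀ = y₀} by
      have hcont : ContinuousAt (fun e : ℝ => a + e • (1 : A)) 0 :=
        continuousAt_const.add (continuousAt_id.smul continuousAt_const)
      have hmem : V₁ ∩ {x : A | S x * a = a ∧ S x * y₀ = y₀} ∈ 𝓝 ((fun e : ℝ => a + e • (1 : A)) 0) := by
        show V₁ ∩ {x : A | S x * a = a ∧ S x * y₀ = y₀} ∈ 𝓝 (a + (0 : ℝ) • (1 : A))
        simpa using hT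
      exact hcont.eventually_mem hmem)
  have hε2 : (a + (δ₂ / 2) • (1 : A)) ∈ V₁ ∩ {x : A | S x * a = a ∧ S x * y₀ = y₀} := by
    apply hδ₂sub
    rw [Real.dist_eq, sub_zero, abs_of_pos (by positivity)]
    exact half_lt_self hδ₂
  have h9 := hSx' _ hε2
  rw [mul_add, h8, mul_smul_comm, mul_one] at h9
  have h10 : (δ₂ / 2) • S x' = (δ₂ / 2) • (1 : A) := add_left_cancel h9
  have hSx'1 : S x' = 1 := smul_right_injective A (by positivity) h10
  -- contradiction with isolation at a
  have hxa : x' = a := by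
    apply hisol x' hSx'1
    rw [dist_comm]
    exact hx'dist
  have : t • y₀ = 0 := by
    have := congrArg (fun z => z - a) hxa
    simpa [hx'def] using this
  rcases smul_eq_zero.mp this with h | h
  · exact htne h
  · exact hy₀ne h
end

section
/- Let A be a commutative unital real Banach algebra and S : A → A satisfy S(x+S(x)y) = S(x)S(y) on G* = {x : S(x) ∈ A⁻¹}. If the range of S contains ℝ₊·1_A (i.e., for each t > 0 there is x with S(x) = t·1_A), then N := {x : S(x) = 1} is a real vector subspace of A. -/
open Set

section Aux

variable {A : Type*} [NormedCommRing A] [NormedAlgebra ℝ A] [CompleteSpace A]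

private lemma unit_smul_one {t : ℝ} (ht : t ≠ 0) : IsUnit (t • (1 : A)) := by
  rw [← Algebra.algebraMap_eq_smul_one]
  exact (algebraMap ℝ A).isUnit_map (isUnit_iff_ne_zero.mpr ht)

private lemma key_line (S : A → A) (hS : Continuous S)
    (hGS : ∀ x y : A, IsUnit (S x) → IsUnit (S y) → S (x + S x * y) = S x * S y)
    (hran : ∀ t : ℝ, 0 < t → ∃ x : A, S x = t • (1 : A))
    (n : A) (hn : S n = 1) : ∀ σ : ℝ, S (σ • n) = 1 := by
  have hnu : IsUnit (S n) := hn ▸ isUnit_one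
  have hcont : Continuous fun σ : ℝ => S (σ • n) :=
    hS.comp (continuous_id.smul continuous_const)
  have hUopen : IsOpen {σ : ℝ | IsUnit (S (σ • n))} :=
    Units.isOpen.preimage hcont
  -- the period lemma
  have hL1 : ∀ w : A, IsUnit (S w) → S (n + w) = S w := by
    intro w hw
    have h := hGS n w hnu hw
    rwa [hn, one_mul, one_mul] at h
  -- natural multiples of n are in the kernel
  have hNat : ∀ k : ℕ, S (((k : ℝ) + 1) • n) = 1 := by
    intro k
    induction k with
    | zero => simpa using hn
    | succ m ih =>
      have hw : IsUnit (S (((m : ℝ) + 1) • n)) := ih ▸ isUnit_one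
      have h2 := hL1 _ hw
      have h3 : n + ((m : ℝ) + 1) • n = (((m + 1 : ℕ) : ℝ) + 1) • n := by
        push_cast
        module
      rw [h3] at h2
      rw [h2, ih]
  have hInt : ∀ k : ℤ, 1 ≤ k → S ((k : ℝ) • n) = 1 := by
    intro k hk
    obtain ⟨m, rfl⟩ : ∃ m : ℕ, k = (m : ℤ) + 1 := ⟨(k - 1).toNat, by omega⟩
    have := hNat m
    convert this using 3
    push_cast
    ring
  -- main pointwise claim
  have hKey : ∀ σ : ℝ, IsUnit (S (σ • n)) → S (σ • n) = 1 := by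
    intro σ hu
    have h1mem : (1 : ℝ) ∈ {σ : ℝ | IsUnit (S (σ • n))} := by
      simp only [mem_setOf_eq, one_smul, hn]
      exact isUnit_one
    obtain ⟨ε, hε, hball⟩ := Metric.isOpen_iff.mp hUopen 1 h1mem
    -- parameters
    set a : ℤ := ⌊σ⌋ - 1 with ha
    have hρ1 : (1 : ℝ) ≤ σ - (a : ℝ) := by
      have := Int.floor_le σ
      push_cast [ha]
      linarith
    have hρ2 : σ - (a : ℝ) < 2 := by
      have := Int.lt_floor_add_one σ
      push_cast [ha]
      linarith
    set ρ : ℝ := σ - (a : ℝ) with hρdef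
    have hρpos : 0 < ρ := by linarith
    set b : ℕ := ⌈1 / ε⌉₊ + 1 with hb
    have hbε : 1 / ε < (b : ℝ) := by
      have h1 := Nat.le_ceil (1 / ε)
      have h2 : ((⌈1 / ε⌉₊ : ℕ) : ℝ) < (b : ℝ) := by exact_mod_cast Nat.lt_succ_self _
      linarith
    have hbpos : (0 : ℝ) < b := lt_of_le_of_lt (by positivity) hbε
    set t : ℝ := (b : ℝ) / ρ with htdef
    have ht0 : 0 < t := div_pos hbpos hρpos
    have htρ : t * ρ = b := div_mul_cancel₀ _ (ne_of_gt hρpos)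
    have h2tε : 1 < 2 * t * ε := by
      have h2 : (b : ℝ) / 2 < (b : ℝ) / ρ :=
        div_lt_div_of_pos_left hbpos hρpos hρ2
      have h3 : 1 < (b : ℝ) * ε := by
        rw [div_lt_iff₀ hε] at hbε
        linarith
      rw [htdef]
      nlinarith
    obtain ⟨x, hx⟩ := hran t ht0
    have hxu : IsUnit (S x) := by rw [hx]; exact unit_smul_one (ne_of_gt ht0)
    set f : ℝ → A := fun τ => S (x + τ • n) with hf
    have hfc : Continuous f :=
      hS.comp (continuous_const.add (continuous_id.smul continuous_const))
    -- transported values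
    have hval : ∀ s : ℝ, IsUnit (S (s • n)) → S (x + (t * s) • n) = t • S (s • n) := by
      intro s hs
      have h := hGS x (s • n) hxu hs
      rw [hx, smul_mul_assoc, one_mul, smul_smul, smul_mul_assoc, one_mul] at h
      exact h
    set α : ℝ := t * (1 - ε) with hα
    set β : ℝ := t * (1 + ε) with hβ
    have hβα : α + 1 < β := by
      rw [hα, hβ]
      nlinarith
    have htrans : ∀ τ : ℝ, α < τ → τ < β → IsUnit (f τ) := by
      intro τ hτ1 hτ2
      have hτt : τ / t ∈ Metric.ball (1 : ℝ) ε := by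
        rw [Real.ball_eq_Ioo]
        constructor
        · rw [lt_div_iff₀ ht0]
          rw [hα] at hτ1
          linarith
        · rw [div_lt_iff₀ ht0]
          rw [hβ] at hτ2
          linarith
      have hsu : IsUnit (S ((τ / t) • n)) := hball hτt
      have hveq : f τ = t • S ((τ / t) • n) := by
        have h := hval (τ / t) hsu
        rw [mul_div_cancel₀ _ (ne_of_gt ht0)] at h
        exact h
      rw [hveq, ← one_mul (S ((τ / t) • n)), ← smul_mul_assoc]
      exact (unit_smul_one (ne_of_gt ht0)).mul hsu
    -- bootstrap: all τ > α give units
    have hboot : ∀ τ : ℝ, α < τ → IsUnit (f τ) := by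
      by_contra hcon
      push_neg at hcon
      obtain ⟨τ₀, hτ₀α, hτ₀⟩ := hcon
      set Bad : Set ℝ := {τ : ℝ | β ≤ τ ∧ ¬IsUnit (f τ)} with hBad
      have hBne : Bad.Nonempty := by
        refine ⟨τ₀, ?_, hτ₀⟩
        by_contra hlt
        exact hτ₀ (htrans τ₀ hτ₀α (lt_of_not_ge hlt))
      have hBclosed : IsClosed Bad := by
        have h1 : IsClosed {τ : ℝ | β ≤ τ} := isClosed_le continuous_const continuous_id
        have h2 : IsClosed {τ : ℝ | ¬IsUnit (f τ)} :=
          (Units.isOpen.preimage hfc).isClosed_compl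
        exact h1.inter h2
      have hBbdd : BddBelow Bad := ⟨β, fun τ hτ => hτ.1⟩
      set J : ℝ := sInf Bad with hJ
      have hJB : J ∈ Bad := hBclosed.csInf_mem hBne hBbdd
      have hJβ : β ≤ J := hJB.1
      have hIoo : ∀ τ : ℝ, α < τ → τ < J → IsUnit (f τ) := by
        intro τ h1 h2
        by_cases hc : τ < β
        · exact htrans τ h1 hc
        · by_contra hnu'
          exact absurd (csInf_le hBbdd ⟨le_of_not_gt hc, hnu'⟩) (not_le_of_gt h2)
      have hEq : Set.EqOn f (fun τ => f (τ - 1)) (Set.Ioo (α + 1) J) := by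
        intro τ hτ
        have hw : IsUnit (f (τ - 1)) := hIoo _ (by linarith [hτ.1]) (by linarith [hτ.2])
        have h := hL1 (x + (τ - 1) • n) hw
        have harg : n + (x + (τ - 1) • n) = x + τ • n := by
          rw [sub_smul, one_smul]
          abel
        rw [harg] at h
        exact h
      have hα1J : α + 1 < J := lt_of_lt_of_le hβα hJβ
      have hJc : f J = f (J - 1) := by
        have hcl : J ∈ closure (Set.Ioo (α + 1) J) := by
          rw [closure_Ioo (ne_of_lt hα1J)]
          exact right_mem_Icc.mpr (le_of_lt hα1J)
        exact (hEq.closure hfc (hfc.comp (continuous_id.sub continuous_const))) hcl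
      have hJu : IsUnit (f J) := by
        rw [hJc]
        exact hIoo (J - 1) (by linarith) (by linarith)
      exact hJB.2 hJu
    -- periodicity
    have hper : ∀ τ : ℝ, α < τ → f (τ + 1) = f τ := by
      intro τ hτ
      have h := hL1 (x + τ • n) (hboot τ hτ)
      have harg : n + (x + τ • n) = x + (τ + 1) • n := by
        rw [add_smul, one_smul]
        abel
      rw [harg] at h
      exact h
    have hperN : ∀ m : ℕ, ∀ τ : ℝ, α < τ → f (τ + (m : ℝ)) = f τ := by
      intro m
      induction m with
      | zero => intro τ _; simp
      | succ p ih =>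
        intro τ hτ
        have h1 : τ + ((p + 1 : ℕ) : ℝ) = (τ + (p : ℝ)) + 1 := by push_cast; ring
        have h2 : α < τ + (p : ℝ) := by
          have : (0 : ℝ) ≤ (p : ℝ) := Nat.cast_nonneg p
          linarith
        rw [h1, hper (τ + (p : ℝ)) h2]
        exact ih τ hτ
    -- integer lattice values
    have hIntVal : ∀ k : ℤ, 1 ≤ k → f (t * (k : ℝ)) = t • (1 : A) := by
      intro k hk
      have h1 : S ((k : ℝ) • n) = 1 := hInt k hk
      have h2 := hval (k : ℝ) (h1 ▸ isUnit_one)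
      rw [h1] at h2
      exact h2
    set k₀ : ℤ := max 1 (1 - a) with hk₀def
    have hk₀ : 1 ≤ k₀ := le_max_left _ _
    have hk₁ : 1 ≤ k₀ + a := by
      have := le_max_right 1 (1 - a)
      omega
    have hαk : α < t * ((k₀ + a : ℤ) : ℝ) := by
      rw [hα]
      have h1 : (1 : ℝ) ≤ ((k₀ + a : ℤ) : ℝ) := by exact_mod_cast hk₁
      nlinarith
    have hB2 : f (t * ((k₀ + a : ℤ) : ℝ) + (b : ℝ)) = t • (1 : A) := by
      rw [hperN b _ hαk, hIntVal _ hk₁]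
    -- final equation
    set p : A := x + (t * (k₀ : ℝ)) • n with hp
    have hpval : S p = t • (1 : A) := hIntVal k₀ hk₀
    have hpu : IsUnit (S p) := by rw [hpval]; exact unit_smul_one (ne_of_gt ht0)
    have heq := hGS p (σ • n) hpu hu
    simp only [hpval, smul_mul_assoc, one_mul, smul_smul] at heq
    have hsum : t * (k₀ : ℝ) + t * σ = t * ((k₀ + a : ℤ) : ℝ) + (b : ℝ) := by
      have h1 : t * σ - t * (a : ℝ) = (b : ℝ) := by
        rw [← htρ, hρdef]; ring
      rw [Int.cast_add]
      linear_combination h1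
    have harg : p + (t * σ) • n = x + (t * ((k₀ + a : ℤ) : ℝ) + (b : ℝ)) • n := by
      rw [hp, ← hsum, add_smul]
      abel
    have hB2' : S (x + (t * ((k₀ + a : ℤ) : ℝ) + (b : ℝ)) • n) = t • (1 : A) := hB2
    rw [harg, hB2'] at heq
    have hfin := congrArg (fun z => t⁻¹ • z) heq
    simpa [smul_smul, inv_mul_cancel₀ (ne_of_gt ht0)] using hfin.symm
  -- clopen argument
  have hTU : {σ : ℝ | S (σ • n) = 1} = {σ : ℝ | IsUnit (S (σ • n))} := by
    ext σ'
    simp only [mem_setOf_eq]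
    constructor
    · intro h; rw [h]; exact isUnit_one
    · exact hKey σ'
  have hclosed : IsClosed {σ : ℝ | S (σ • n) = 1} := isClosed_eq hcont continuous_const
  have hclopen : IsClopen {σ : ℝ | S (σ • n) = 1} := ⟨hclosed, hTU ▸ hUopen⟩
  intro σ
  rcases isClopen_iff.mp hclopen with h | h
  · exfalso
    have h1 : (1 : ℝ) ∈ {σ : ℝ | S (σ • n) = 1} := by
      simp only [mem_setOf_eq, one_smul, hn]
    rw [h] at h1
    exact h1
  · have hmem : σ ∈ {σ : ℝ | S (σ • n) = 1} := h ▸ mem_univ σ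
    exact hmem

end Aux

/-- Lemma 4.2: if `ran S ⊇ ℝ₊ · 1`, then the kernel `N = {x : S x = 1}` is a real
vector subspace of `A`. -/
theorem kernel_vector_subspace {A : Type*} [NormedCommRing A] [NormedAlgebra ℝ A]
    [CompleteSpace A] (S : A → A) (hS : Continuous S)
    (hGS : ∀ x y : A, IsUnit (S x) → IsUnit (S y) → S (x + S x * y) = S x * S y)
    (hran : ∀ t : ℝ, 0 < t → ∃ x : A, S x = t • (1 : A)) :
    ∃ V : Submodule ℝ A, (V : Set A) = {x : A | S x = 1} := by
  refine ⟨{ carrier := {x : A | S x = 1},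
            add_mem' := ?_,
            zero_mem' := ?_,
            smul_mem' := ?_ }, rfl⟩
  · intro a b ha hb
    simp only [mem_setOf_eq] at ha hb ⊢
    have h := hGS a b (ha ▸ isUnit_one) (hb ▸ isUnit_one)
    rwa [ha, hb, one_mul, one_mul] at h
  · obtain ⟨x₁, hx₁⟩ := hran 1 one_pos
    rw [one_smul] at hx₁
    have h := key_line S hS hGS hran x₁ hx₁ 0
    simpa using h
  · intro c x hx
    exact key_line S hS hGS hran x hx c
end

section
/- Let A be a commutative unital real Banach algebra and S : A → A satisfy the Gołąb–Schinzel equation S(x+S(x)y) = S(x)S(y) on all of A. For any a ∈ A, if 1_A − S(a) is invertible, then S(a·(1_A − S(a))⁻¹) = 0. In particular, if ‖S(a)‖ < ‖1_A‖ (with ‖1_A‖ = 1), then S(a(1−S(a))⁻¹) = 0. -/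
/-- Proposition 4.4 (A dichotomy): if `1 - S a` is invertible, then
`S (a (1 - S a)⁻¹) = 0`; in particular this holds when `‖S a‖ < 1` (with `‖1‖ = 1`). -/
theorem dichotomy_vanishing {A : Type*} [NormedCommRing A] [NormedAlgebra ℝ A]
    [CompleteSpace A] [NormOneClass A] (S : A → A)
    (hGS : ∀ x y : A, S (x + S x * y) = S x * S y) :
    (∀ a : A, IsUnit (1 - S a) → S (a * Ring.inverse (1 - S a)) = 0) ∧
    (∀ a : A, ‖S a‖ < 1 → S (a * Ring.inverse (1 - S a)) = 0) := by
  have main : ∀ a : A, IsUnit (1 - S a) → S (a * Ring.inverse (1 - S a)) = 0 := by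
    intro a ha
    set b := a * Ring.inverse (1 - S a) with hb
    have hba : a + S a * b = b := by
      have h1 : (1 - S a) * Ring.inverse (1 - S a) = 1 := Ring.mul_inverse_cancel _ ha
      have : b * (1 - S a) = a := by
        rw [hb, mul_assoc, mul_comm (Ring.inverse (1 - S a)), h1, mul_one]
      linear_combination -this
    have hSb : S b = S a * S b := by
      conv_lhs => rw [← hba, hGS]
    have h0 : (1 - S a) * S b = 0 := by linear_combination hSb
    calc S b = Ring.inverse (1 - S a) * ((1 - S a) * S b) := by
              rw [← mul_assoc, Ring.inverse_mul_cancel _ ha, one_mul]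
      _ = 0 := by rw [h0, mul_zero]
  refine ⟨main, fun a ha => main a ?_⟩
  exact isUnit_one_sub_of_norm_lt_one (by simpa using ha)
end

section
/- Let Σ = (σ_ij) be a real d×d matrix and define S : ℝᵈ → ℝᵈ by S(x) = 1 + Σx (componentwise, with 1 = (1,...,1)). Then S satisfies S(x + S(x)·y) = S(x)·S(y) (with Hadamard/componentwise product) for all x, y ∈ ℝᵈ if and only if for all indices i, j, k: σ_ij·σ_ik = σ_ik·σ_kj; equivalently, for each pair (i,k), either σ_ik = 0 or the rows σ_i and σ_k of Σ are equal. -/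
open Finset in
/-- The `1`-plus-linear map `x ↦ 1 + Σ x` on `ℝᵈ` with Hadamard product. -/
noncomputable def linGS (d : ℕ) (σ : Fin d → Fin d → ℝ) (x : Fin d → ℝ) : Fin d → ℝ :=
  fun i => 1 + ∑ j, σ i j * x j

open Finset in
lemma linGS_main_iff (d : ℕ) (σ : Fin d → Fin d → ℝ) :
    (∀ x y : Fin d → ℝ,
        linGS d σ (x + linGS d σ x * y) = linGS d σ x * linGS d σ y) ↔
      (∀ i j k : Fin d, σ i j * σ i k = σ i k * σ k j) := by
  constructor
  · intro H i j k
    have h := congrFun (H (Pi.single j 1) (Pi.single k 1)) i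
    simp only [linGS, Pi.add_apply, Pi.mul_apply, Pi.single_apply, mul_ite, mul_one, mul_zero,
      Finset.sum_ite_eq', Finset.mem_univ, if_true] at h
    -- h : 1 + ∑ m, σ i m * (single j 1 m + (1 + σ m j) * single k 1 m) = (1 + σ i j) * (1 + σ i k)
    simp only [mul_add, Finset.sum_add_distrib] at h
    simp only [mul_ite, mul_one, mul_zero, Finset.sum_ite_eq', Finset.mem_univ,
      if_true] at h
    linear_combination -h
  · intro h x y
    funext i
    simp only [linGS, Pi.add_apply, Pi.mul_apply]
    have key : (∑ j, σ i j * ((1 + ∑ k, σ j k * x k) * y j))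
        = (∑ j, σ i j * y j) + (∑ j, σ i j * x j) * (∑ j, σ i j * y j) := by
      have e1 : (∑ j, σ i j * ((1 + ∑ k, σ j k * x k) * y j))
          = (∑ j, σ i j * y j) + ∑ j, ∑ k, σ i j * σ j k * x k * y j := by
        rw [← Finset.sum_add_distrib]
        refine Finset.sum_congr rfl fun j _ => ?_
        have e : σ i j * ((∑ k, σ j k * x k) * y j) = ∑ k, σ i j * σ j k * x k * y j := by
          rw [Finset.sum_mul, Finset.mul_sum]
          exact Finset.sum_congr rfl fun k _ => by ring
        rw [← e]; ring
      have e2 : (∑ j, σ i j * x j) * (∑ j, σ i j * y j)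
          = ∑ j, ∑ k, σ i j * σ j k * x k * y j := by
        rw [Finset.sum_mul_sum]
        rw [Finset.sum_comm]
        refine Finset.sum_congr rfl fun j _ => Finset.sum_congr rfl fun k _ => ?_
        linear_combination (x k * y j) * h i k j
      rw [e1, e2]
    calc 1 + ∑ j, σ i j * (x j + (1 + ∑ k, σ j k * x k) * y j)
        = 1 + ((∑ j, σ i j * x j) + ∑ j, σ i j * ((1 + ∑ k, σ j k * x k) * y j)) := by
          rw [← Finset.sum_add_distrib]
          exact congrArg _ (Finset.sum_congr rfl fun j _ => by ring)
      _ = (1 + ∑ j, σ i j * x j) * (1 + ∑ j, σ i j * y j) := by rw [key]; ring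

/-- Theorem 3.1(i): `S(x) = 1 + Σx` solves the Gołąb–Schinzel equation on `ℝᵈ`
(Hadamard product) iff `σ_ij σ_ik = σ_ik σ_kj` for all `i j k`; equivalently,
for each pair `(i,k)`, either `σ_ik = 0` or rows `i` and `k` of `Σ` coincide. -/
theorem euclidean_characterization (d : ℕ) (σ : Fin d → Fin d → ℝ) :
    ((∀ x y : Fin d → ℝ,
        linGS d σ (x + linGS d σ x * y) = linGS d σ x * linGS d σ y) ↔
      (∀ i j k : Fin d, σ i j * σ i k = σ i k * σ k j)) ∧
    ((∀ x y : Fin d → ℝ,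
        linGS d σ (x + linGS d σ x * y) = linGS d σ x * linGS d σ y) ↔
      (∀ i k : Fin d, σ i k = 0 ∨ ∀ j : Fin d, σ i j = σ k j)) := by
  refine ⟨linGS_main_iff d σ, (linGS_main_iff d σ).trans ⟨fun h i k => ?_, fun h i j k => ?_⟩⟩
  · by_cases hik : σ i k = 0
    · exact Or.inl hik
    · refine Or.inr fun j => mul_right_cancel₀ hik ?_
      have := h i j k
      linarith [h i j k]
  · rcases h i k with h0 | hrow
    · simp [h0]
    · rw [hrow j]; ring
end

section
/- Define S : ℝ² → ℝ² by S(x₁,x₂) = (1, e^{γx₁}) for a fixed real γ. Then S satisfies S(a + S(a)·b) = S(a)·S(b) for all a, b ∈ ℝ², where · is componentwise multiplication. -/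
/-- The degenerate form `S(x₁,x₂) = (1, e^{γ x₁})` solves the Gołąb–Schinzel
equation on `ℝ²` with componentwise product. -/
theorem degenerate_solution (γ : ℝ) :
    ∀ a b : ℝ × ℝ,
      (fun x : ℝ × ℝ => ((1, Real.exp (γ * x.1)) : ℝ × ℝ))
          (a + (fun x : ℝ × ℝ => ((1, Real.exp (γ * x.1)) : ℝ × ℝ)) a * b)
        = (fun x : ℝ × ℝ => ((1, Real.exp (γ * x.1)) : ℝ × ℝ)) a *
          (fun x : ℝ × ℝ => ((1, Real.exp (γ * x.1)) : ℝ × ℝ)) b := by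
  intro a b
  simp [Prod.ext_iff, Prod.mul_def, mul_add, Real.exp_add]
end

section
/- Let A be a commutative unital real Banach algebra, and e_i (i in a finite index set I) mutually orthogonal idempotents (e_i e_j = 0 for i ≠ j, e_i² = e_i). Let σ : A → ℝ be linear and set ν(x) := Σ_i σ(e_i x)·e_i and S(x) := 1_A + ν(x). Then S satisfies the Gołąb–Schinzel equation S(x + S(x)y) = S(x)S(y) for all x, y ∈ A. -/
/-- Proposition 5.4: for mutually orthogonal idempotents `e i` and linear
`σ : A → ℝ`, `S(x) := 1 + Σᵢ σ(eᵢ x) • eᵢ` solves the Gołąb–Schinzel equation. -/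
theorem idempotent_solution {A : Type*} [NormedCommRing A] [NormedAlgebra ℝ A]
    [CompleteSpace A] {I : Type*} [Fintype I] (e : I → A)
    (horth : ∀ i j : I, i ≠ j → e i * e j = 0)
    (hidem : ∀ i : I, e i * e i = e i)
    (σ : A →ₗ[ℝ] ℝ) :
    ∀ x y : A,
      (1 : A) + ∑ i, σ (e i * (x + ((1 : A) + ∑ j, σ (e j * x) • e j) * y)) • e i
        = ((1 : A) + ∑ i, σ (e i * x) • e i) * ((1 : A) + ∑ i, σ (e i * y) • e i) := by
  intro x y
  have hsum : ∀ (z : A) i, e i * ∑ j, σ (e j * z) • e j = σ (e i * z) • e i := by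
    intro z i
    rw [Finset.mul_sum, Finset.sum_eq_single i]
    · rw [mul_smul_comm, hidem]
    · intro j _ hj
      rw [mul_smul_comm, horth i j (Ne.symm hj), smul_zero]
    · intro h; exact absurd (Finset.mem_univ i) h
  have key : ∀ i, e i * (x + ((1 : A) + ∑ j, σ (e j * x) • e j) * y)
      = e i * x + e i * y + σ (e i * x) • (e i * y) := by
    intro i
    have : e i * (((1 : A) + ∑ j, σ (e j * x) • e j) * y)
        = e i * y + (σ (e i * x) • e i) * y := by
      rw [add_mul, one_mul, mul_add, ← mul_assoc, hsum x i]
    rw [mul_add, this, smul_mul_assoc, add_assoc]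
  have lhs : (∑ i, σ (e i * (x + ((1 : A) + ∑ j, σ (e j * x) • e j) * y)) • e i)
      = ∑ i, (σ (e i * x) + σ (e i * y) + σ (e i * x) * σ (e i * y)) • e i := by
    refine Finset.sum_congr rfl fun i _ => ?_
    rw [key i, map_add, map_add, map_smul, smul_eq_mul]
  rw [lhs]
  have cross : (∑ i, σ (e i * x) • e i) * (∑ i, σ (e i * y) • e i)
      = ∑ i, (σ (e i * x) * σ (e i * y)) • e i := by
    rw [Finset.sum_mul]
    refine Finset.sum_congr rfl fun i _ => ?_
    rw [smul_mul_assoc, hsum y i, smul_smul, mul_comm]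
  rw [add_mul, one_mul, mul_add, mul_one, cross]
  have split : ∀ i : I, (σ (e i * x) + σ (e i * y) + σ (e i * x) * σ (e i * y)) • e i
      = σ (e i * x) • e i + σ (e i * y) • e i + (σ (e i * x) * σ (e i * y)) • e i :=
    fun i => by rw [add_smul, add_smul]
  simp_rw [split, Finset.sum_add_distrib]
  abel
end

section
/- Let S : ℂ → ℂ be holomorphic (ℂ-differentiable) and satisfy S(z + S(z)w) = S(z)S(w) for all z, w ∈ ℂ with S(z), S(w) ≠ 0, and suppose S is not identically zero. Then there exists ρ ∈ ℂ such that S(z) = 1 + ρz for all z. -/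
open Filter Topology

/-- Holomorphic solutions of the complex Gołąb–Schinzel equation, not
identically zero, are canonical: `S z = 1 + ρ z`. -/
theorem holomorphic_GS_canonical (S : ℂ → ℂ) (hd : Differentiable ℂ S)
    (hGS : ∀ z w : ℂ, S z ≠ 0 → S w ≠ 0 → S (z + S z * w) = S z * S w)
    (hnz : ∃ z : ℂ, S z ≠ 0) :
    ∃ ρ : ℂ, ∀ z : ℂ, S z = 1 + ρ * z := by
  obtain ⟨z₀, hz₀⟩ := hnz
  have hS : AnalyticOnNhd ℂ S Set.univ := hd.differentiableOn.analyticOnNhd isOpen_univ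
  -- S 0 ≠ 0
  have h0 : S 0 ≠ 0 := by
    intro h0
    rcases (hS 0 trivial).eventually_eq_zero_or_eventually_ne_zero with h | h
    · exact hz₀ (hS.eqOn_zero_of_preconnected_of_eventuallyEq_zero isPreconnected_univ
        trivial h trivial)
    · have heq : (fun w => S (z₀ + S z₀ * w)) =ᶠ[𝓝[≠] (0:ℂ)] fun w => S z₀ * S w :=
        h.mono fun w hw => hGS z₀ w hz₀ hw
      have h1 : Tendsto (fun w => S (z₀ + S z₀ * w)) (𝓝[≠] (0:ℂ)) (𝓝 (S z₀)) := by
        have : Tendsto (fun w => S (z₀ + S z₀ * w)) (𝓝 (0:ℂ)) (𝓝 (S z₀)) := by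
          have hc : Continuous fun w : ℂ => S (z₀ + S z₀ * w) :=
            hd.continuous.comp (by continuity)
          simpa using hc.tendsto 0
        exact this.mono_left nhdsWithin_le_nhds
      have h2 : Tendsto (fun w => S z₀ * S w) (𝓝[≠] (0:ℂ)) (𝓝 0) := by
        have : Tendsto (fun w => S z₀ * S w) (𝓝 (0:ℂ)) (𝓝 (S z₀ * S 0)) :=
          (tendsto_const_nhds.mul (hd.continuous.tendsto 0))
        rw [h0, mul_zero] at this
        exact this.mono_left nhdsWithin_le_nhds
      exact hz₀ (tendsto_nhds_unique (h1.congr' heq) h2)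
  -- S 0 = 1
  have hS0 : S 0 = 1 := by
    have := hGS z₀ 0 hz₀ h0
    simp only [mul_zero, add_zero] at this
    exact (mul_left_cancel₀ hz₀ (by simpa using this)).symm
  set ρ := deriv S 0 with hρ
  -- derivative is constant on the nonvanishing set
  have key : ∀ z : ℂ, S z ≠ 0 → deriv S z = ρ := by
    intro z hz
    have hne : ∀ᶠ w in 𝓝 (0:ℂ), S w ≠ 0 :=
      (hd.continuous.continuousAt (x := 0)).eventually_ne (by simp [hS0])
    have heq : (fun w => S (z + S z * w)) =ᶠ[𝓝 (0:ℂ)] fun w => S z * S w :=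
      hne.mono fun w hw => hGS z w hz hw
    have hg : HasDerivAt (fun w => S (z + S z * w)) (deriv S z * S z) 0 := by
      have hin : HasDerivAt (fun w : ℂ => z + S z * w) (S z) 0 := by
        simpa using ((hasDerivAt_id (0:ℂ)).const_mul (S z)).const_add z
      simpa [Function.comp_def] using ((hd (z + S z * 0)).hasDerivAt.comp 0 hin)
    have hh : HasDerivAt (fun w => S z * S w) (S z * ρ) 0 :=
      (hd 0).hasDerivAt.const_mul (S z)
    have := hg.deriv ▸ (Filter.EventuallyEq.deriv_eq heq) ▸ hh.deriv
    have h2 : deriv S z * S z = S z * ρ := by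
      rw [← hg.deriv, ← hh.deriv]; exact Filter.EventuallyEq.deriv_eq heq
    field_simp [mul_comm] at h2
    linear_combination h2
  -- identity theorem: deriv S is constantly ρ
  have hconst : ∀ z : ℂ, deriv S z = ρ := by
    have hS' : AnalyticOnNhd ℂ (deriv S) Set.univ := hS.deriv
    have hev : deriv S =ᶠ[𝓝 z₀] fun _ => ρ := by
      have hne : ∀ᶠ w in 𝓝 z₀, S w ≠ 0 :=
        (hd.continuous.continuousAt (x := z₀)).eventually_ne hz₀
      exact hne.mono fun w hw => key w hw
    have := hS'.eqOn_of_preconnected_of_eventuallyEq (analyticOnNhd_const)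
      isPreconnected_univ (Set.mem_univ z₀) hev
    exact fun z => this trivial
  refine ⟨ρ, fun z => ?_⟩
  have hF : Differentiable ℂ fun z : ℂ => S z - ρ * z := hd.sub (by fun_prop)
  have hF' : ∀ x : ℂ, deriv (fun z : ℂ => S z - ρ * z) x = 0 := by
    intro x
    have h1 : HasDerivAt (fun z : ℂ => S z - ρ * z) (deriv S x - ρ) x := by
      have h1' := (hd x).hasDerivAt.sub ((hasDerivAt_id x).const_mul ρ)
      simp only [mul_one] at h1'
      exact h1'
    rw [h1.deriv, hconst x, sub_self]
  have := is_const_of_deriv_eq_zero hF hF' z 0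
  simp only [mul_zero, sub_zero, hS0] at this
  linear_combination this
end
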